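/- arXiv:cs/0702161 — 4 statements merged into one kernel-verified Lean document; each statement's English description precedes it below -/
import Mathlib

section
/- Let S be a finite alphabet, p_S a probability distribution on S, and f_N : S^N × M → S^N an encoder (with finite message set M) such that for every s and m, the output x = f_N(s,m) has the same type (empirical distribution) as s. Let M be uniform on M, S i.i.d. ~ p_S independent of M, and π uniform on the permutations of {1,...,N}, independent of (S,M). Define X = π^{-1} f_N(π S, M). Then X has the same distribution as S, i.e., P(X = x) = ∏_{i=1}^N p_S(x_i) for all x ∈ S^N. -/
open Finset

/-- Two tuples with the same value-counts differ by an index permutation. -/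
lemma rm_exists_perm {S : Type*} [DecidableEq S] {N : ℕ} (y z : Fin N → S)
    (h : ∀ a, (Finset.univ.filter (fun i => y i = a)).card =
      (Finset.univ.filter (fun i => z i = a)).card) :
    ∃ σ : Equiv.Perm (Fin N), ∀ i, y i = z (σ i) := by
  have e : ∀ a : S, {i : Fin N // y i = a} ≃ {i : Fin N // z i = a} := fun a =>
    Fintype.equivOfCardEq (by
      simp only [Fintype.card_subtype]
      exact h a)
  refine ⟨(Equiv.sigmaFiberEquiv y).symm.trans
    ((Equiv.sigmaCongrRight e).trans (Equiv.sigmaFiberEquiv z)), fun i => ?_⟩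
  simp only [Equiv.trans_apply, Equiv.sigmaFiberEquiv, Equiv.coe_fn_symm_mk,
    Equiv.sigmaCongrRight_apply, Equiv.coe_fn_mk, Sigma.map]
  exact ((e (y i)) ⟨i, rfl⟩).2.symm

/-- The number of permutations matching `x` against `y` depends only on the counts of `y`. -/
lemma rm_card_perm_eq {S : Type*} [DecidableEq S] {N : ℕ} (x y z : Fin N → S)
    (h : ∀ a, (Finset.univ.filter (fun i => y i = a)).card =
      (Finset.univ.filter (fun i => z i = a)).card) :
    (Finset.univ.filter (fun π : Equiv.Perm (Fin N) => y = fun j => x (π j))).card =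
    (Finset.univ.filter (fun π : Equiv.Perm (Fin N) => z = fun j => x (π j))).card := by
  obtain ⟨σ, hσ⟩ := rm_exists_perm y z h
  apply Finset.card_bij (fun π _ => σ.symm.trans π)
  · intro π hπ
    simp only [mem_filter, mem_univ, true_and] at hπ ⊢
    funext j
    have h1 := congrFun hπ (σ.symm j)
    have h2 : z j = y (σ.symm j) := by rw [hσ (σ.symm j), Equiv.apply_symm_apply]
    rw [h2, h1, Equiv.trans_apply]
  · intro a _ b _ hab
    ext j
    have := DFunLike.congr_fun hab (σ j)
    simpa using congrArg Fin.val this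
  · intro π hπ
    refine ⟨σ.trans π, ?_, ?_⟩
    · simp only [mem_filter, mem_univ, true_and] at hπ ⊢
      funext j
      rw [hσ j, congrFun hπ (σ j), Equiv.trans_apply]
    · ext j; simp

lemma rm_sum_indicator {α : Type*} [Fintype α] (P : α → Prop) [DecidablePred P] (c : ℝ) :
    ∑ a : α, (if P a then c else 0) = ((Finset.univ.filter P).card : ℝ) * c := by
  rw [← Finset.sum_filter, Finset.sum_const, nsmul_eq_mul]

/-- Perfect security of randomly modulated codes: if the prototype encoder preserves
the type of the covertext, then randomizing it by a uniform secret permutation yields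
a stegotext `X = π⁻¹ f(π S, M)` with exactly the i.i.d. covertext distribution. -/
theorem stmt_4 {S : Type*} [Fintype S] [DecidableEq S] {M : Type*} [Fintype M]
    [Nonempty M] {N : ℕ} (hN : 0 < N)
    (p : S → ℝ) (hp : ∀ a, 0 ≤ p a) (hp1 : ∑ a, p a = 1)
    (f : (Fin N → S) → M → (Fin N → S))
    (hf : ∀ (s : Fin N → S) (m : M) (a : S),
      (Finset.univ.filter (fun i => f s m i = a)).card =
      (Finset.univ.filter (fun i => s i = a)).card)
    (x : Fin N → S) :
    (1 / (N.factorial : ℝ)) * (1 / (Fintype.card M : ℝ)) *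
      ∑ π : Equiv.Perm (Fin N), ∑ m : M, ∑ s : Fin N → S,
        (if f (fun j => s (π j)) m = (fun j => x (π j)) then ∏ i, p (s i) else 0)
      = ∏ i, p (x i) := by
  -- Step 1: reindex the inner sum by `s ↦ s ∘ π`.
  have step1 : ∀ (π : Equiv.Perm (Fin N)) (m : M),
      ∑ s : Fin N → S,
        (if f (fun j => s (π j)) m = (fun j => x (π j)) then ∏ i, p (s i) else 0)
      = ∑ t : Fin N → S, (if f t m = (fun j => x (π j)) then ∏ i, p (t i) else 0) := by
    intro π m
    apply Fintype.sum_equiv (Equiv.arrowCongr π.symm (Equiv.refl S))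
    intro t
    simp only [Equiv.arrowCongr_apply, Equiv.refl_symm, Equiv.coe_refl, Equiv.symm_symm,
      Function.comp]
    congr 1
    exact (Equiv.prod_comp π (fun i => p (t i))).symm
  -- Main computation for fixed m.
  have key : ∀ m : M,
      ∑ π : Equiv.Perm (Fin N), ∑ t : Fin N → S,
        (if f t m = (fun j => x (π j)) then ∏ i, p (t i) else 0)
      = (N.factorial : ℝ) * ∏ i, p (x i) := by
    intro m
    rw [Finset.sum_comm]
    have swap : ∀ t : Fin N → S,
        ∑ π : Equiv.Perm (Fin N), (if f t m = (fun j => x (π j)) then ∏ i, p (t i) else 0)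
        = ∑ π : Equiv.Perm (Fin N), (if t = (fun j => x (π j)) then ∏ i, p (t i) else 0) := by
      intro t
      rw [rm_sum_indicator, rm_sum_indicator,
        rm_card_perm_eq x (f t m) t (hf t m)]
    rw [Finset.sum_congr rfl (fun t _ => swap t), Finset.sum_comm]
    have inner : ∀ π : Equiv.Perm (Fin N),
        ∑ t : Fin N → S, (if t = (fun j => x (π j)) then ∏ i, p (t i) else 0)
        = ∏ i, p (x i) := by
      intro π
      rw [Finset.sum_ite_eq' Finset.univ (fun j => x (π j)) (fun t => ∏ i, p (t i))]
      simp only [mem_univ, if_true]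
      exact Equiv.prod_comp π (fun i => p (x i))
    rw [Finset.sum_congr rfl (fun π _ => inner π), Finset.sum_const, nsmul_eq_mul]
    congr 1
    simp [Fintype.card_perm]
  have sum_eq :
      ∑ π : Equiv.Perm (Fin N), ∑ m : M, ∑ s : Fin N → S,
        (if f (fun j => s (π j)) m = (fun j => x (π j)) then ∏ i, p (s i) else 0)
      = (Fintype.card M : ℝ) * ((N.factorial : ℝ) * ∏ i, p (x i)) := by
    calc ∑ π : Equiv.Perm (Fin N), ∑ m : M, ∑ s : Fin N → S,
        (if f (fun j => s (π j)) m = (fun j => x (π j)) then ∏ i, p (s i) else 0)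
        = ∑ π : Equiv.Perm (Fin N), ∑ m : M, ∑ t : Fin N → S,
          (if f t m = (fun j => x (π j)) then ∏ i, p (t i) else 0) := by
          exact Finset.sum_congr rfl (fun π _ => Finset.sum_congr rfl (fun m _ => step1 π m))
      _ = ∑ m : M, ∑ π : Equiv.Perm (Fin N), ∑ t : Fin N → S,
          (if f t m = (fun j => x (π j)) then ∏ i, p (t i) else 0) := Finset.sum_comm
      _ = ∑ m : M, (N.factorial : ℝ) * ∏ i, p (x i) :=
          Finset.sum_congr rfl (fun m _ => key m)
      _ = (Fintype.card M : ℝ) * ((N.factorial : ℝ) * ∏ i, p (x i)) := by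
          rw [Finset.sum_const, nsmul_eq_mul]; rfl
  rw [sum_eq]
  have h1 : (N.factorial : ℝ) ≠ 0 := Nat.cast_ne_zero.mpr (Nat.factorial_ne_zero N)
  have h2 : (Fintype.card M : ℝ) ≠ 0 := Nat.cast_ne_zero.mpr Fintype.card_ne_zero
  field_simp
end

section
/- Let S be uniform on ℤ/qℤ, V a finite random variable with values in {0,...,L−1}, and (X,V) jointly distributed with S via p_{XV|S}. Define U ∈ {0,...,qL−1} and a new joint law by p_{XU|S}(x, qv+i | s) = (1/q) p_{XV|S}((x−i) mod q, v | (s−i) mod q) for all i, s, x ∈ ℤ/qℤ and v. Then under the new law (with S uniform): (i) P(S = s | U = qv+i) = P_old(S = (s−i) mod q | V = v); (ii) P(U = qv+i) = (1/q) P_old(V = v); and (iii) I(S; U) under the new law equals I(S; V) under the old law. -/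
/-- Shannon entropy (base 2) of a finitely supported distribution. -/
noncomputable def ent {α : Type*} [Fintype α] (p : α → ℝ) : ℝ :=
  -∑ a, p a * Real.logb 2 (p a)

lemma shift_sum {q : ℕ} [NeZero q] (f : ZMod q → ℝ) (i : ZMod q) :
    ∑ x, f (x - i) = ∑ x, f x := (Equiv.subRight i).sum_comp f

lemma scale_log (c w : ℝ) (hc : c ≠ 0) (hw : 0 ≤ w) :
    (c * w) * Real.logb 2 (c * w) = c * (w * Real.logb 2 w) + (c * w) * Real.logb 2 c := by
  rcases hw.eq_or_lt with h | h
  · simp [← h]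
  · rw [Real.logb_mul hc h.ne']; ring

lemma qmul_scale (q : ℕ) [NeZero q] (w : ℝ) (hw : 0 ≤ w) :
    (q : ℝ) * (((1 / (q : ℝ)) * w) * Real.logb 2 ((1 / (q : ℝ)) * w))
      = w * Real.logb 2 w + w * Real.logb 2 (1 / (q : ℝ)) := by
  have hq0 : (q : ℝ) ≠ 0 := Nat.cast_ne_zero.mpr (NeZero.ne q)
  have hc : (1 / (q : ℝ)) ≠ 0 := one_div_ne_zero hq0
  have hqc : (q : ℝ) * (1 / (q : ℝ)) = 1 := mul_one_div_cancel hq0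
  rw [scale_log _ _ hc hw]
  calc (q : ℝ) * ((1 / (q : ℝ)) * (w * Real.logb 2 w)
          + ((1 / (q : ℝ)) * w) * Real.logb 2 (1 / (q : ℝ)))
      = ((q : ℝ) * (1 / (q : ℝ))) * (w * Real.logb 2 w + w * Real.logb 2 (1 / (q : ℝ))) := by
        ring
    _ = _ := by rw [hqc, one_mul]

/-- Properties of the shift-enlarged auxiliary channel: `U = qV + I` (encoded here as
the pair `(V, I) ∈ Fin L × ℤ/qℤ`) with
`p_{XU|S}(x, (v,i) | s) = (1/q) p_{XV|S}((x−i), v | (s−i))` and uniform `S`: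
(i) `P(S=s | U=(v,i)) = P_old(S=s−i | V=v)`, (ii) `P(U=(v,i)) = (1/q) P_old(V=v)`,
and (iii) `I(S;U) = I(S;V)`. -/
theorem stmt_12 (q : ℕ) [NeZero q] (L : ℕ)
    (p : ZMod q → ZMod q → Fin L → ℝ) (hp : ∀ s x v, 0 ≤ p s x v)
    (hp1 : ∀ s, ∑ x, ∑ v, p s x v = 1) :
    -- (i) conditional law of S given U
    (∀ (s : ZMod q) (v : Fin L) (i : ZMod q),
      (∑ x : ZMod q, (1 / (q : ℝ)) * ((1 / (q : ℝ)) * p (s - i) (x - i) v)) /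
        (∑ s' : ZMod q, ∑ x : ZMod q,
          (1 / (q : ℝ)) * ((1 / (q : ℝ)) * p (s' - i) (x - i) v)) =
      (∑ x : ZMod q, (1 / (q : ℝ)) * p (s - i) x v) /
        (∑ s' : ZMod q, ∑ x : ZMod q, (1 / (q : ℝ)) * p s' x v)) ∧
    -- (ii) marginal law of U
    (∀ (v : Fin L) (i : ZMod q),
      ∑ s : ZMod q, ∑ x : ZMod q,
          (1 / (q : ℝ)) * ((1 / (q : ℝ)) * p (s - i) (x - i) v) =
        (1 / (q : ℝ)) * ∑ s : ZMod q, ∑ x : ZMod q, (1 / (q : ℝ)) * p s x v) ∧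
    -- (iii) I(S;U) = I(S;V)
    (ent (fun s : ZMod q => ∑ x : ZMod q, ∑ u : Fin L × ZMod q,
          (1 / (q : ℝ)) * ((1 / (q : ℝ)) * p (s - u.2) (x - u.2) u.1)) +
       ent (fun u : Fin L × ZMod q => ∑ s : ZMod q, ∑ x : ZMod q,
          (1 / (q : ℝ)) * ((1 / (q : ℝ)) * p (s - u.2) (x - u.2) u.1)) -
       ent (fun t : ZMod q × Fin L × ZMod q => ∑ x : ZMod q,
          (1 / (q : ℝ)) * ((1 / (q : ℝ)) * p (t.1 - t.2.2) (x - t.2.2) t.2.1))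
     =
     ent (fun s : ZMod q => ∑ x : ZMod q, ∑ v : Fin L, (1 / (q : ℝ)) * p s x v) +
       ent (fun v : Fin L => ∑ s : ZMod q, ∑ x : ZMod q, (1 / (q : ℝ)) * p s x v) -
       ent (fun t : ZMod q × Fin L => ∑ x : ZMod q, (1 / (q : ℝ)) * p t.1 x t.2)) := by
  have hq0 : (q : ℝ) ≠ 0 := Nat.cast_ne_zero.mpr (NeZero.ne q)
  have hc : (1 / (q : ℝ)) ≠ 0 := one_div_ne_zero hq0
  have hqc : (q : ℝ) * (1 / (q : ℝ)) = 1 := mul_one_div_cancel hq0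
  have hx : ∀ (a : ZMod q) (v : Fin L) (i : ZMod q),
      ∑ x : ZMod q, (1 / (q : ℝ)) * ((1 / (q : ℝ)) * p a (x - i) v)
        = (1 / (q : ℝ)) * ∑ x : ZMod q, (1 / (q : ℝ)) * p a x v := by
    intro a v i
    rw [shift_sum (fun x => (1 / (q : ℝ)) * ((1 / (q : ℝ)) * p a x v)) i, Finset.mul_sum]
  have part2 : ∀ (v : Fin L) (i : ZMod q),
      ∑ s : ZMod q, ∑ x : ZMod q,
          (1 / (q : ℝ)) * ((1 / (q : ℝ)) * p (s - i) (x - i) v) =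
        (1 / (q : ℝ)) * ∑ s : ZMod q, ∑ x : ZMod q, (1 / (q : ℝ)) * p s x v := by
    intro v i
    calc ∑ s : ZMod q, ∑ x : ZMod q, (1 / (q : ℝ)) * ((1 / (q : ℝ)) * p (s - i) (x - i) v)
        = ∑ s : ZMod q, (1 / (q : ℝ)) * ∑ x : ZMod q, (1 / (q : ℝ)) * p (s - i) x v :=
          Finset.sum_congr rfl fun s _ => hx (s - i) v i
      _ = ∑ s : ZMod q, (1 / (q : ℝ)) * ∑ x : ZMod q, (1 / (q : ℝ)) * p s x v :=
          shift_sum (fun s => (1 / (q : ℝ)) * ∑ x : ZMod q, (1 / (q : ℝ)) * p s x v) i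
      _ = (1 / (q : ℝ)) * ∑ s : ZMod q, ∑ x : ZMod q, (1 / (q : ℝ)) * p s x v := by
          rw [Finset.mul_sum]
  refine ⟨?_, part2, ?_⟩
  · intro s v i
    rw [hx (s - i) v i, part2 v i, mul_div_mul_left _ _ hc]
  · -- (iii)
    have hAnn : ∀ (s : ZMod q) (v : Fin L), 0 ≤ ∑ x : ZMod q, (1 / (q : ℝ)) * p s x v :=
      fun s v => Finset.sum_nonneg fun x _ => mul_nonneg (by positivity) (hp s x v)
    have hBnn : ∀ v : Fin L, 0 ≤ ∑ s : ZMod q, ∑ x : ZMod q, (1 / (q : ℝ)) * p s x v :=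
      fun v => Finset.sum_nonneg fun s _ => hAnn s v
    have key1 : ∀ s : ZMod q, ∑ v : Fin L, ∑ x : ZMod q, (1 / (q : ℝ)) * p s x v
        = 1 / (q : ℝ) := by
      intro s
      rw [Finset.sum_comm]
      calc ∑ x : ZMod q, ∑ v : Fin L, (1 / (q : ℝ)) * p s x v
          = (1 / (q : ℝ)) * ∑ x : ZMod q, ∑ v : Fin L, p s x v := by
            simp [Finset.mul_sum]
        _ = 1 / (q : ℝ) := by rw [hp1 s, mul_one]
    have hBsum : ∑ v : Fin L, ∑ s : ZMod q, ∑ x : ZMod q, (1 / (q : ℝ)) * p s x v = 1 := by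
      rw [Finset.sum_comm]
      calc ∑ s : ZMod q, ∑ v : Fin L, ∑ x : ZMod q, (1 / (q : ℝ)) * p s x v
          = ∑ _s : ZMod q, (1 / (q : ℝ)) := Finset.sum_congr rfl fun s _ => key1 s
        _ = 1 := by
            rw [Finset.sum_const, Finset.card_univ, ZMod.card, nsmul_eq_mul, hqc]
    have hAsum : ∑ s : ZMod q, ∑ v : Fin L, ∑ x : ZMod q, (1 / (q : ℝ)) * p s x v = 1 := by
      rw [Finset.sum_comm]; exact hBsum
    -- first arguments are both the constant 1/q
    have hfun1L : (fun s : ZMod q => ∑ x : ZMod q, ∑ u : Fin L × ZMod q,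
        (1 / (q : ℝ)) * ((1 / (q : ℝ)) * p (s - u.2) (x - u.2) u.1))
        = fun _ : ZMod q => 1 / (q : ℝ) := by
      funext s
      rw [Finset.sum_comm]
      calc ∑ u : Fin L × ZMod q, ∑ x : ZMod q,
            (1 / (q : ℝ)) * ((1 / (q : ℝ)) * p (s - u.2) (x - u.2) u.1)
          = ∑ u : Fin L × ZMod q,
              (1 / (q : ℝ)) * ∑ x : ZMod q, (1 / (q : ℝ)) * p (s - u.2) x u.1 :=
            Finset.sum_congr rfl fun u _ => hx (s - u.2) u.1 u.2
        _ = ∑ i : ZMod q, ∑ v : Fin L,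
              (1 / (q : ℝ)) * ∑ x : ZMod q, (1 / (q : ℝ)) * p (s - i) x v := by
            rw [Fintype.sum_prod_type, Finset.sum_comm]
        _ = ∑ _i : ZMod q, (1 / (q : ℝ)) * (1 / (q : ℝ)) := by
            refine Finset.sum_congr rfl fun i _ => ?_
            rw [← Finset.mul_sum, key1 (s - i)]
        _ = 1 / (q : ℝ) := by
            rw [Finset.sum_const, Finset.card_univ, ZMod.card, nsmul_eq_mul, ← mul_assoc,
              hqc, one_mul]
    have hfun1R : (fun s : ZMod q => ∑ x : ZMod q, ∑ v : Fin L, (1 / (q : ℝ)) * p s x v)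
        = fun _ : ZMod q => 1 / (q : ℝ) := by
      funext s
      rw [Finset.sum_comm]; exact key1 s
    -- entropy of U
    have hfunU : (fun u : Fin L × ZMod q => ∑ s : ZMod q, ∑ x : ZMod q,
        (1 / (q : ℝ)) * ((1 / (q : ℝ)) * p (s - u.2) (x - u.2) u.1))
        = fun u : Fin L × ZMod q =>
            (1 / (q : ℝ)) * ∑ s : ZMod q, ∑ x : ZMod q, (1 / (q : ℝ)) * p s x u.1 :=
      funext fun u => part2 u.1 u.2
    have entU : ent (fun u : Fin L × ZMod q => ∑ s : ZMod q, ∑ x : ZMod q,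
        (1 / (q : ℝ)) * ((1 / (q : ℝ)) * p (s - u.2) (x - u.2) u.1))
        = ent (fun v : Fin L => ∑ s : ZMod q, ∑ x : ZMod q, (1 / (q : ℝ)) * p s x v)
          - Real.logb 2 (1 / (q : ℝ)) := by
      rw [hfunU]
      unfold ent
      rw [Fintype.sum_prod_type]
      have step : ∀ v : Fin L, ∑ _i : ZMod q,
          ((1 / (q : ℝ)) * ∑ s : ZMod q, ∑ x : ZMod q, (1 / (q : ℝ)) * p s x v) *
            Real.logb 2 ((1 / (q : ℝ)) * ∑ s : ZMod q, ∑ x : ZMod q, (1 / (q : ℝ)) * p s x v)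
          = (∑ s : ZMod q, ∑ x : ZMod q, (1 / (q : ℝ)) * p s x v) *
              Real.logb 2 (∑ s : ZMod q, ∑ x : ZMod q, (1 / (q : ℝ)) * p s x v)
            + (∑ s : ZMod q, ∑ x : ZMod q, (1 / (q : ℝ)) * p s x v) *
                Real.logb 2 (1 / (q : ℝ)) := by
        intro v
        rw [Finset.sum_const, Finset.card_univ, ZMod.card, nsmul_eq_mul,
          qmul_scale q _ (hBnn v)]
      rw [Finset.sum_congr rfl fun v _ => step v, Finset.sum_add_distrib,
        ← Finset.sum_mul, hBsum, one_mul]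
      ring
    -- entropy of (S,U)
    have hfunSU : (fun t : ZMod q × Fin L × ZMod q => ∑ x : ZMod q,
        (1 / (q : ℝ)) * ((1 / (q : ℝ)) * p (t.1 - t.2.2) (x - t.2.2) t.2.1))
        = fun t : ZMod q × Fin L × ZMod q =>
            (1 / (q : ℝ)) * ∑ x : ZMod q, (1 / (q : ℝ)) * p (t.1 - t.2.2) x t.2.1 :=
      funext fun t => hx (t.1 - t.2.2) t.2.1 t.2.2
    have entSU : ent (fun t : ZMod q × Fin L × ZMod q => ∑ x : ZMod q,
        (1 / (q : ℝ)) * ((1 / (q : ℝ)) * p (t.1 - t.2.2) (x - t.2.2) t.2.1))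
        = ent (fun t : ZMod q × Fin L => ∑ x : ZMod q, (1 / (q : ℝ)) * p t.1 x t.2)
          - Real.logb 2 (1 / (q : ℝ)) := by
      rw [hfunSU]
      unfold ent
      rw [Fintype.sum_prod_type, Finset.sum_comm]
      have step : ∀ u : Fin L × ZMod q,
          ∑ s : ZMod q,
            ((1 / (q : ℝ)) * ∑ x : ZMod q, (1 / (q : ℝ)) * p (s - u.2) x u.1) *
              Real.logb 2 ((1 / (q : ℝ)) * ∑ x : ZMod q, (1 / (q : ℝ)) * p (s - u.2) x u.1)
          = ∑ s : ZMod q,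
            ((1 / (q : ℝ)) * ∑ x : ZMod q, (1 / (q : ℝ)) * p s x u.1) *
              Real.logb 2 ((1 / (q : ℝ)) * ∑ x : ZMod q, (1 / (q : ℝ)) * p s x u.1) :=
        fun u => shift_sum (fun s =>
          ((1 / (q : ℝ)) * ∑ x : ZMod q, (1 / (q : ℝ)) * p s x u.1) *
            Real.logb 2 ((1 / (q : ℝ)) * ∑ x : ZMod q, (1 / (q : ℝ)) * p s x u.1)) u.2
      rw [Finset.sum_congr rfl fun u _ => step u, Fintype.sum_prod_type]
      have step2 : ∀ v : Fin L, ∑ _i : ZMod q, ∑ s : ZMod q,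
            ((1 / (q : ℝ)) * ∑ x : ZMod q, (1 / (q : ℝ)) * p s x v) *
              Real.logb 2 ((1 / (q : ℝ)) * ∑ x : ZMod q, (1 / (q : ℝ)) * p s x v)
          = ∑ s : ZMod q,
              ((∑ x : ZMod q, (1 / (q : ℝ)) * p s x v) *
                  Real.logb 2 (∑ x : ZMod q, (1 / (q : ℝ)) * p s x v)
                + (∑ x : ZMod q, (1 / (q : ℝ)) * p s x v) * Real.logb 2 (1 / (q : ℝ))) := by
        intro v
        rw [Finset.sum_const, Finset.card_univ, ZMod.card, nsmul_eq_mul, Finset.mul_sum]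
        exact Finset.sum_congr rfl fun s _ => qmul_scale q _ (hAnn s v)
      rw [Finset.sum_congr rfl fun v _ => step2 v]
      have expand : ∑ v : Fin L, ∑ s : ZMod q,
            ((∑ x : ZMod q, (1 / (q : ℝ)) * p s x v) *
                Real.logb 2 (∑ x : ZMod q, (1 / (q : ℝ)) * p s x v)
              + (∑ x : ZMod q, (1 / (q : ℝ)) * p s x v) * Real.logb 2 (1 / (q : ℝ)))
          = (∑ v : Fin L, ∑ s : ZMod q,
              (∑ x : ZMod q, (1 / (q : ℝ)) * p s x v) *
                Real.logb 2 (∑ x : ZMod q, (1 / (q : ℝ)) * p s x v))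
            + (∑ v : Fin L, ∑ s : ZMod q, ∑ x : ZMod q, (1 / (q : ℝ)) * p s x v)
              * Real.logb 2 (1 / (q : ℝ)) := by
        rw [Finset.sum_mul]
        rw [← Finset.sum_add_distrib]
        refine Finset.sum_congr rfl fun v _ => ?_
        rw [Finset.sum_mul, ← Finset.sum_add_distrib]
      rw [expand, hBsum, one_mul]
      have : ∑ t : ZMod q × Fin L,
          (∑ x : ZMod q, (1 / (q : ℝ)) * p t.1 x t.2) *
            Real.logb 2 (∑ x : ZMod q, (1 / (q : ℝ)) * p t.1 x t.2)
          = ∑ v : Fin L, ∑ s : ZMod q,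
              (∑ x : ZMod q, (1 / (q : ℝ)) * p s x v) *
                Real.logb 2 (∑ x : ZMod q, (1 / (q : ℝ)) * p s x v) := by
        rw [Fintype.sum_prod_type, Finset.sum_comm]
      rw [this]
      ring
    rw [hfun1L, hfun1R, entU, entSU]
    ring
end

section
/- Let S be uniform on ℤ/qℤ, and let p_{XV|S} be a channel with auxiliary variable V ∈ {0,...,L−1}. Let p_{XU|S} be its shift-enlarged version as above, with U ∈ {0,...,qL−1}. Let p_{Y|X} be a cyclic channel on ℤ/qℤ, i.e., p_{Y|X}(y|x) = p_{Y|X}((y−x) mod q | 0). Form Y by passing X through p_{Y|X} in both systems (Markov chains (V,S)→X→Y and (U,S)→X→Y). Then I(Y;U) in the enlarged system is at least I(Y;V) in the original system. -/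
open Finset Real Fintype

section Entropy

variable {α β : Type*} [Fintype α] [Fintype β]

theorem ent_eq_sum_negMulLog (p : α → ℝ) : ent p = (∑ a, negMulLog (p a)) / log 2 := by
  simp only [ent, negMulLog, logb, Finset.sum_div, ← Finset.sum_neg_distrib]
  exact Finset.sum_congr rfl fun a _ => by ring

theorem ent_comp_equiv (e : α ≃ β) (p : β → ℝ) : ent (fun a => p (e a)) = ent p := by
  rw [ent_eq_sum_negMulLog, ent_eq_sum_negMulLog, e.sum_comp (fun b => negMulLog (p b))]

theorem ent_const_inv_card : ent (fun _ : α => 1 / (card α : ℝ)) = logb 2 (card α) := by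
  rw [ent, Finset.sum_const, Finset.card_univ, nsmul_eq_mul, one_div, logb_inv]
  rcases (Nat.cast_nonneg (card α) : (0 : ℝ) ≤ card α).eq_or_lt with h | h
  · simp [← h]
  · field_simp

theorem ent_prod_mul {F : α → ℝ} {G : β → ℝ} (hF : ∑ a, F a = 1) (hG : ∑ b, G b = 1) :
    ent (fun t : α × β => F t.1 * G t.2) = ent F + ent G := by
  simp only [ent_eq_sum_negMulLog, Fintype.sum_prod_type, negMulLog_mul, Finset.sum_add_distrib,
    ← Finset.mul_sum, ← Finset.sum_mul, hF, hG]
  ring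

theorem ent_le_logb_card {p : α → ℝ} (hp0 : ∀ a, 0 ≤ p a) (hp1 : ∑ a, p a = 1) :
    ent p ≤ logb 2 (card α) := by
  have hcard : (0 : ℝ) < card α := by
    have : Nonempty α := by
      by_contra h
      simp [not_nonempty_iff.mp h] at hp1
    exact_mod_cast Fintype.card_pos
  have jensen := concaveOn_negMulLog.le_map_sum (t := univ) (w := fun _ => (card α : ℝ)⁻¹)
    (p := p) (fun _ _ => by positivity) (by simp [hcard.ne']) (fun a _ => hp0 a)
  simp only [smul_eq_mul, ← Finset.mul_sum, hp1, mul_one] at jensen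
  rw [ent_eq_sum_negMulLog, logb, div_le_div_iff_of_pos_right (log_pos one_lt_two)]
  rw [negMulLog, log_inv, mul_neg, neg_mul, neg_neg] at jensen
  exact (mul_le_mul_iff_of_pos_left (inv_pos.mpr hcard)).mp jensen

theorem sum_one_div_card [Nonempty α] : ∑ _ : α, 1 / (card α : ℝ) = 1 := by
  rw [Finset.sum_const, Finset.card_univ, nsmul_eq_mul]
  exact mul_one_div_cancel (Nat.cast_ne_zero.mpr Fintype.card_ne_zero)

end Entropy

theorem sum_sum_comp_sub_right {G M : Type*} [AddGroup G] [Fintype G] [AddCommMonoid M]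
    (F : G → G → M) (i : G) : ∑ s, ∑ x, F (s - i) (x - i) = ∑ s, ∑ x, F s x :=
  Fintype.sum_equiv (Equiv.subRight i) _ _ fun _ =>
    Fintype.sum_equiv (Equiv.subRight i) _ _ fun _ => rfl

section ShiftEnlargement

variable {G V : Type*} [AddCommGroup G] [Fintype G] {p : G → G → V → ℝ} {W : G → G → ℝ}

theorem enlarged_joint_eq (hWcyc : ∀ x y, W x y = W 0 (y - x)) (y : G) (u : V × G) :
    ∑ s, ∑ x, (1 / (card G : ℝ)) * ((1 / (card G : ℝ)) * p (s - u.2) (x - u.2) u.1) * W x y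
      = (∑ s, ∑ x, (1 / (card G : ℝ)) * p s x u.1 * W x (y - u.2)) * (1 / (card G : ℝ)) := by
  have hshift : ∀ x, W x y = W (x - u.2) (y - u.2) := fun x => by
    rw [hWcyc, hWcyc (x - u.2), sub_sub_sub_cancel_right]
  simp only [hshift]
  rw [sum_sum_comp_sub_right (fun s x => (1 / (card G : ℝ)) * ((1 / (card G : ℝ)) * p s x u.1) *
    W x (y - u.2))]
  simp only [Finset.sum_mul]
  ring_nf

theorem enlarged_aux_eq (u : V × G) :
    ∑ s, ∑ x, (1 / (card G : ℝ)) * ((1 / (card G : ℝ)) * p (s - u.2) (x - u.2) u.1)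
      = (∑ s, ∑ x, (1 / (card G : ℝ)) * p s x u.1) * (1 / (card G : ℝ)) := by
  rw [sum_sum_comp_sub_right (fun s x => (1 / (card G : ℝ)) * ((1 / (card G : ℝ)) * p s x u.1))]
  simp only [Finset.sum_mul]
  ring_nf

variable [Fintype V]

theorem sum_uniform_source_eq_one (hp1 : ∀ s, ∑ x, ∑ v, p s x v = 1) :
    ∑ s, ∑ x, ∑ v, (1 / (card G : ℝ)) * p s x v = 1 := by
  simp only [← Finset.mul_sum, hp1, mul_one, sum_one_div_card]

theorem sum_aux_eq_one (hp1 : ∀ s, ∑ x, ∑ v, p s x v = 1) :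
    ∑ v, ∑ s, ∑ x, (1 / (card G : ℝ)) * p s x v = 1 := by
  refine Finset.sum_comm.trans (Eq.trans ?_ (sum_uniform_source_eq_one hp1))
  exact Finset.sum_congr rfl fun s _ => Finset.sum_comm

theorem sum_joint_eq_one (hp1 : ∀ s, ∑ x, ∑ v, p s x v = 1) (hW1 : ∀ x, ∑ y, W x y = 1) :
    ∑ t : G × V, ∑ s, ∑ x, (1 / (card G : ℝ)) * p s x t.2 * W x t.1 = 1 := by
  rw [Fintype.sum_prod_type, Finset.sum_comm]
  refine Eq.trans (Finset.sum_congr rfl fun v _ => ?_) (sum_aux_eq_one hp1)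
  rw [Finset.sum_comm]
  refine Finset.sum_congr rfl fun s _ => ?_
  rw [Finset.sum_comm]
  simp only [← Finset.mul_sum, hW1, mul_one]

theorem sum_output_eq_one (hp1 : ∀ s, ∑ x, ∑ v, p s x v = 1) (hW1 : ∀ x, ∑ y, W x y = 1) :
    ∑ y, ∑ s, ∑ x, ∑ v, (1 / (card G : ℝ)) * p s x v * W x y = 1 := by
  rw [Finset.sum_comm]
  refine Eq.trans (Finset.sum_congr rfl fun s _ => ?_) (sum_uniform_source_eq_one hp1)
  rw [Finset.sum_comm]
  refine Finset.sum_congr rfl fun x _ => ?_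
  rw [Finset.sum_comm]
  simp only [← Finset.mul_sum, hW1, mul_one]

theorem ent_output_le_logb_card (hp0 : ∀ s x v, 0 ≤ p s x v) (hp1 : ∀ s, ∑ x, ∑ v, p s x v = 1)
    (hW0 : ∀ x y, 0 ≤ W x y) (hW1 : ∀ x, ∑ y, W x y = 1) :
    ent (fun y => ∑ s, ∑ x, ∑ v, (1 / (card G : ℝ)) * p s x v * W x y) ≤ logb 2 (card G) :=
  ent_le_logb_card (fun y => sum_nonneg fun s _ => sum_nonneg fun x _ => sum_nonneg fun v _ =>
    mul_nonneg (mul_nonneg (by positivity) (hp0 s x v)) (hW0 x y)) (sum_output_eq_one hp1 hW1)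

theorem enlarged_output_eq (hp1 : ∀ s, ∑ x, ∑ v, p s x v = 1) (hW1 : ∀ x, ∑ y, W x y = 1)
    (hWcyc : ∀ x y, W x y = W 0 (y - x)) (y : G) :
    ∑ s, ∑ x, ∑ u : V × G,
      (1 / (card G : ℝ)) * ((1 / (card G : ℝ)) * p (s - u.2) (x - u.2) u.1) * W x y
      = 1 / (card G : ℝ) := by
  have hreindex : ∑ u : V × G, ∑ s, ∑ x, (1 / (card G : ℝ)) * p s x u.1 * W x (y - u.2) = 1 :=
    (Fintype.sum_equiv ((Equiv.prodComm V G).trans ((Equiv.subLeft y).prodCongr (Equiv.refl V)))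
      _ _ fun _ => rfl).trans (sum_joint_eq_one hp1 hW1)
  conv_lhs => enter [2, s]; rw [Finset.sum_comm]
  rw [Finset.sum_comm]
  simp only [enlarged_joint_eq hWcyc, ← Finset.sum_mul, hreindex, one_mul]

theorem ent_enlarged_output (hp1 : ∀ s, ∑ x, ∑ v, p s x v = 1) (hW1 : ∀ x, ∑ y, W x y = 1)
    (hWcyc : ∀ x y, W x y = W 0 (y - x)) :
    ent (fun y => ∑ s, ∑ x, ∑ u : V × G,
      (1 / (card G : ℝ)) * ((1 / (card G : ℝ)) * p (s - u.2) (x - u.2) u.1) * W x y)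
      = logb 2 (card G) := by
  simp only [enlarged_output_eq hp1 hW1 hWcyc, ent_const_inv_card]

theorem ent_enlarged_aux (hp1 : ∀ s, ∑ x, ∑ v, p s x v = 1) :
    ent (fun u : V × G => ∑ s, ∑ x,
      (1 / (card G : ℝ)) * ((1 / (card G : ℝ)) * p (s - u.2) (x - u.2) u.1))
      = ent (fun v => ∑ s, ∑ x, (1 / (card G : ℝ)) * p s x v) + logb 2 (card G) := by
  simp only [enlarged_aux_eq]
  rw [ent_prod_mul (sum_aux_eq_one hp1) sum_one_div_card, ent_const_inv_card]

theorem ent_enlarged_joint (hp1 : ∀ s, ∑ x, ∑ v, p s x v = 1) (hW1 : ∀ x, ∑ y, W x y = 1)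
    (hWcyc : ∀ x y, W x y = W 0 (y - x)) :
    ent (fun t : G × V × G => ∑ s, ∑ x,
      (1 / (card G : ℝ)) * ((1 / (card G : ℝ)) * p (s - t.2.2) (x - t.2.2) t.2.1) * W x t.1)
      = ent (fun t : G × V => ∑ s, ∑ x, (1 / (card G : ℝ)) * p s x t.2 * W x t.1)
        + logb 2 (card G) := by
  let e : G × V × G ≃ (G × V) × G :=
    { toFun := fun t => ((t.1 - t.2.2, t.2.1), t.2.2)
      invFun := fun w => (w.1.1 + w.2, w.1.2, w.2)
      left_inv := fun t => by simp
      right_inv := fun w => by simp }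
  simp only [enlarged_joint_eq hWcyc]
  rw [← ent_const_inv_card, ← ent_prod_mul (sum_joint_eq_one hp1 hW1) sum_one_div_card]
  exact ent_comp_equiv e
    (fun w => (∑ s, ∑ x, (1 / (card G : ℝ)) * p s x w.1.2 * W x w.1.1) * (1 / (card G : ℝ)))

end ShiftEnlargement

/-- For a cyclic attack channel `p_{Y|X}` on `ℤ/qℤ`, the shift-enlarged auxiliary
channel (with `U = qV + I`, encoded as the pair `(V, I) ∈ Fin L × ℤ/qℤ`) satisfies
`I(Y;U) ≥ I(Y;V)`. -/
theorem stmt_13 (q : ℕ) [NeZero q] (L : ℕ)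
    (p : ZMod q → ZMod q → Fin L → ℝ) (hp : ∀ s x v, 0 ≤ p s x v)
    (hp1 : ∀ s, ∑ x, ∑ v, p s x v = 1)
    (W : ZMod q → ZMod q → ℝ) (hW : ∀ x y, 0 ≤ W x y)
    (hW1 : ∀ x, ∑ y, W x y = 1)
    (hWcyc : ∀ x y : ZMod q, W x y = W 0 (y - x)) :
    ent (fun y : ZMod q => ∑ s : ZMod q, ∑ x : ZMod q, ∑ u : Fin L × ZMod q,
        (1 / (q : ℝ)) * ((1 / (q : ℝ)) * p (s - u.2) (x - u.2) u.1) * W x y) +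
      ent (fun u : Fin L × ZMod q => ∑ s : ZMod q, ∑ x : ZMod q,
        (1 / (q : ℝ)) * ((1 / (q : ℝ)) * p (s - u.2) (x - u.2) u.1)) -
      ent (fun t : ZMod q × Fin L × ZMod q => ∑ s : ZMod q, ∑ x : ZMod q,
        (1 / (q : ℝ)) * ((1 / (q : ℝ)) * p (s - t.2.2) (x - t.2.2) t.2.1) * W x t.1)
    ≥
    ent (fun y : ZMod q => ∑ s : ZMod q, ∑ x : ZMod q, ∑ v : Fin L,
        (1 / (q : ℝ)) * p s x v * W x y) +
      ent (fun v : Fin L => ∑ s : ZMod q, ∑ x : ZMod q, (1 / (q : ℝ)) * p s x v) -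
      ent (fun t : ZMod q × Fin L => ∑ s : ZMod q, ∑ x : ZMod q,
        (1 / (q : ℝ)) * p s x t.2 * W x t.1) := by
  have hq : (q : ℝ) = card (ZMod q) := by rw [ZMod.card]
  rw [hq, ent_enlarged_output hp1 hW1 hWcyc, ent_enlarged_aux hp1,
    ent_enlarged_joint hp1 hW1 hWcyc]
  linarith [ent_output_le_logb_card hp hp1 hW hW1]
end

section
/- Over the binary alphabet with Hamming distortion, the perfectly secure steganographic capacity with a passive warden and Bernoulli(1/2) covertext equals h(D_1) for 0 ≤ D_1 ≤ 1/2 and equals 1 for D_1 ≥ 1/2, where h is the binary entropy function. Equivalently: max { H(X|S) : p_{X|S} with P(X ≠ S) ≤ D_1 and p_X = p_S } = min(h(D_1), 1) when S ~ Bernoulli(1/2). -/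
/-- Binary entropy function (base 2). -/
noncomputable def hb (t : ℝ) : ℝ := -(t * Real.logb 2 t) - (1 - t) * Real.logb 2 (1 - t)

lemma hb_eq_binEntropy (t : ℝ) : hb t = Real.binEntropy t / Real.log 2 := by
  simp [hb, Real.binEntropy, Real.logb, Real.log_inv]
  ring

lemma half_mul_logb (u : ℝ) (hu : 0 ≤ u) :
    (1 / 2 * u) * Real.logb 2 (1 / 2 * u) = 1 / 2 * (u * Real.logb 2 u - u) := by
  rcases eq_or_lt_of_le hu with h | h
  · simp [← h]
  · have h2 : (1 / 2 * u : ℝ) = u / 2 := by ring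
    rw [h2, Real.logb_div (ne_of_gt h) (by norm_num),
      Real.logb_self_eq_one (by norm_num)]
    ring

lemma ent_marg (K : Bool → Bool → ℝ) (hrow : ∀ s, ∑ x, K s x = 1) :
    ent (fun s : Bool => ∑ x, (1 / 2 : ℝ) * K s x) = 1 := by
  have h : ∀ s, ∑ x, (1 / 2 : ℝ) * K s x = 1 / 2 := by
    intro s
    rw [← Finset.mul_sum, hrow s, mul_one]
  simp only [ent, h]
  rw [Fintype.sum_bool]
  have : Real.logb 2 (1 / 2 : ℝ) = -1 := by
    rw [one_div, Real.logb_inv, Real.logb_self_eq_one (by norm_num)]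
  rw [this]; ring

lemma ent_joint (t : ℝ) (ht0 : 0 ≤ t) (ht1 : t ≤ 1)
    (K : Bool → Bool → ℝ)
    (hK : ∀ s x, K s x = if s = x then 1 - t else t) :
    ent (fun p : Bool × Bool => (1 / 2 : ℝ) * K p.1 p.2) = hb t + 1 := by
  simp only [ent, Fintype.sum_prod_type, Fintype.sum_bool, hK]
  norm_num
  rw [half_mul_logb t ht0, half_mul_logb (1 - t) (by linarith)]
  unfold hb
  ring

/-- The value attained by the BSC(t) channel is `hb t`. -/
lemma mem_of_bsc (D1 t : ℝ) (ht0 : 0 ≤ t) (ht2 : t ≤ 1 / 2) (htD : t ≤ D1) :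
    (hb t) ∈ {r : ℝ | ∃ K : Bool → Bool → ℝ,
        (∀ s x, 0 ≤ K s x) ∧ (∀ s, ∑ x, K s x = 1) ∧
        (∑ s, (1 / 2 : ℝ) * K s (!s) ≤ D1) ∧
        (∀ x, ∑ s, (1 / 2 : ℝ) * K s x = 1 / 2) ∧
        r = ent (fun t : Bool × Bool => (1 / 2 : ℝ) * K t.1 t.2) -
              ent (fun s : Bool => ∑ x, (1 / 2 : ℝ) * K s x)} := by
  refine ⟨fun s x => if s = x then 1 - t else t, ?_, ?_, ?_, ?_, ?_⟩
  · intro s x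
    by_cases h : s = x <;> simp [h] <;> linarith
  · intro s
    rw [Fintype.sum_bool]
    cases s <;> simp
  · rw [Fintype.sum_bool]
    simp only [Bool.not_true, Bool.not_false,
      if_neg (by decide : (true : Bool) ≠ false),
      if_neg (by decide : (false : Bool) ≠ true)]
    linarith
  · intro x
    rw [Fintype.sum_bool]
    cases x <;> simp <;> ring
  · rw [ent_joint t ht0 (by linarith) _ (fun s x => rfl),
      ent_marg _ (by intro s; rw [Fintype.sum_bool]; cases s <;> simp)]
    ring

/-- Any element of the constraint set has value `hb t` for some `t ∈ [0, min D1 1]`. -/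
lemma val_ub (D1 : ℝ) (r : ℝ)
    (hr : r ∈ {r : ℝ | ∃ K : Bool → Bool → ℝ,
        (∀ s x, 0 ≤ K s x) ∧ (∀ s, ∑ x, K s x = 1) ∧
        (∑ s, (1 / 2 : ℝ) * K s (!s) ≤ D1) ∧
        (∀ x, ∑ s, (1 / 2 : ℝ) * K s x = 1 / 2) ∧
        r = ent (fun t : Bool × Bool => (1 / 2 : ℝ) * K t.1 t.2) -
              ent (fun s : Bool => ∑ x, (1 / 2 : ℝ) * K s x)}) :
    ∃ t : ℝ, 0 ≤ t ∧ t ≤ 1 ∧ t ≤ D1 ∧ r = hb t := by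
  obtain ⟨K, hpos, hrow, hdist, hcol, hval⟩ := hr
  set t := K true false with htdef
  have hrowT := hrow true
  have hrowF := hrow false
  rw [Fintype.sum_bool] at hrowT hrowF
  have hcolT := hcol true
  rw [Fintype.sum_bool] at hcolT
  -- K true true = 1 - t
  have hTT : K true true = 1 - t := by linarith
  have hFT : K false true = t := by linarith
  have hFF : K false false = 1 - t := by linarith
  have hdist' : t ≤ D1 := by
    rw [Fintype.sum_bool] at hdist
    simp only [Bool.not_true, Bool.not_false] at hdist
    rw [hFT] at hdist
    linarith
  have ht0 : 0 ≤ t := hpos true false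
  have ht1 : t ≤ 1 := by have := hpos true true; linarith
  refine ⟨t, ht0, ht1, hdist', ?_⟩
  have hKeq : ∀ s x, K s x = if s = x then 1 - t else t := by
    intro s x
    cases s <;> cases x <;> simpa [hTT, hFT, hFF]
  rw [hval, ent_joint t ht0 ht1 K hKeq, ent_marg K hrow]
  ring

lemma hb_le_one (t : ℝ) : hb t ≤ 1 := by
  rw [hb_eq_binEntropy, div_le_iff₀ (Real.log_pos (by norm_num)), one_mul]
  exact Real.binEntropy_le_log_two

lemma hb_mono {a b : ℝ} (ha : 0 ≤ a) (hab : a ≤ b) (hb2 : b ≤ 1 / 2) :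
    hb a ≤ hb b := by
  rw [hb_eq_binEntropy, hb_eq_binEntropy]
  have hlog : 0 < Real.log 2 := Real.log_pos (by norm_num)
  have key : Real.binEntropy a ≤ Real.binEntropy b := ?_
  · exact div_le_div_of_nonneg_right key hlog.le
  rcases eq_or_lt_of_le hab with h | h
  · rw [h]
  · exact le_of_lt (Real.binEntropy_strictMonoOn
      ⟨ha, by rw [show ((2:ℝ)⁻¹ = 1/2) by norm_num]; linarith⟩
      ⟨by linarith, by rw [show ((2:ℝ)⁻¹ = 1/2) by norm_num]; linarith⟩ h)

/-- Binary-Hamming, passive-warden, Bernoulli(1/2) covertext: the perfectly secure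
steganographic capacity `max { H(X|S) : P(X ≠ S) ≤ D₁, p_X = p_S }` equals
`h(D₁)` for `0 ≤ D₁ ≤ 1/2` and equals `1` for `D₁ ≥ 1/2`. -/
theorem stmt_14 (D1 : ℝ) (hD1 : 0 ≤ D1) :
    (D1 ≤ 1 / 2 →
      IsGreatest {r : ℝ | ∃ K : Bool → Bool → ℝ,
        (∀ s x, 0 ≤ K s x) ∧ (∀ s, ∑ x, K s x = 1) ∧
        (∑ s, (1 / 2 : ℝ) * K s (!s) ≤ D1) ∧
        (∀ x, ∑ s, (1 / 2 : ℝ) * K s x = 1 / 2) ∧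
        r = ent (fun t : Bool × Bool => (1 / 2 : ℝ) * K t.1 t.2) -
              ent (fun s : Bool => ∑ x, (1 / 2 : ℝ) * K s x)} (hb D1)) ∧
    (1 / 2 ≤ D1 →
      IsGreatest {r : ℝ | ∃ K : Bool → Bool → ℝ,
        (∀ s x, 0 ≤ K s x) ∧ (∀ s, ∑ x, K s x = 1) ∧
        (∑ s, (1 / 2 : ℝ) * K s (!s) ≤ D1) ∧
        (∀ x, ∑ s, (1 / 2 : ℝ) * K s x = 1 / 2) ∧
        r = ent (fun t : Bool × Bool => (1 / 2 : ℝ) * K t.1 t.2) -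
              ent (fun s : Bool => ∑ x, (1 / 2 : ℝ) * K s x)} 1) := by
  constructor
  · intro hle
    constructor
    · exact mem_of_bsc D1 D1 hD1 hle le_rfl
    · intro r hr
      obtain ⟨t, ht0, ht1, htD, hval⟩ := val_ub D1 r hr
      rw [hval]
      exact hb_mono ht0 htD hle
  · intro hge
    constructor
    · have h1 : hb (1 / 2 : ℝ) = 1 := by
        rw [hb_eq_binEntropy, show ((1:ℝ)/2 = 2⁻¹) by norm_num,
          Real.binEntropy_two_inv, div_self (Real.log_ne_zero_of_pos_of_ne_one (by norm_num) (by norm_num))]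
      have hm := mem_of_bsc D1 (1 / 2) (by norm_num) le_rfl hge
      rwa [h1] at hm
    · intro r hr
      obtain ⟨t, ht0, ht1, htD, hval⟩ := val_ub D1 r hr
      rw [hval]
      exact hb_le_one t
end
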